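/- arXiv:1905.10184 — 3 statements merged into one kernel-verified Lean document; each statement's English description precedes it below -/
import Mathlib

section
/- Let w₀, w₁, w₂, w₃ be real numbers with √(w₁²+w₂²+w₃²) < w₀, and let M = w₀σ₀ + w₁σ₁ + w₂σ₂ + w₃σ₃, a Hermitian 2×2 complex matrix. Then M is positive definite, and tr( M · log M ) = 2·w₀·( log(w₀) + c(|w⃗|/w₀) ), where |w⃗| = √(w₁²+w₂²+w₃²), log M denotes the matrix logarithm of M obtained by applying the real logarithm to the eigenvalues of M in a spectral decomposition (continuous functional calculus for Hermitian matrices), and c(λ) := (1/2)·log(1−λ²) + (λ/2)·log((1+λ)/(1−λ)). -/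
/-! The eigenvalues of a Hermitian 2×2 matrix are fixed by its trace and determinant, which for
`M = w₀σ₀ + w⃗·σ⃗` are `2w₀` and `w₀² − |w⃗|²`; so the eigenvalues are `w₀ ± |w⃗|`, both positive.
As `log M` is given by the functional calculus, `tr(M log M) = ∑ λ log λ` over the eigenvalues,
and `(w₀ + r) log (w₀ + r) + (w₀ − r) log (w₀ − r) = 2w₀ (log w₀ + c(r / w₀))` for `r = |w⃗|`. -/

open Matrix
open scoped ComplexOrder

/-- The Pauli matrices `σ₀, σ₁, σ₂, σ₃` as 2×2 complex matrices. -/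
noncomputable def pauli : Fin 4 → Matrix (Fin 2) (Fin 2) ℂ :=
  ![!![1, 0; 0, 1], !![0, 1; 1, 0], !![0, -Complex.I; Complex.I, 0], !![1, 0; 0, -1]]

/-- The function `c(λ) := (1/2)·log(1−λ²) + (λ/2)·log((1+λ)/(1−λ))`. -/
noncomputable def cFun (l : ℝ) : ℝ :=
  (1 / 2) * Real.log (1 - l ^ 2) + (l / 2) * Real.log ((1 + l) / (1 - l))

/-- The logarithm of a Hermitian matrix, obtained by applying the real logarithm to the
eigenvalues in a spectral decomposition `M = U·diag(λᵢ)·U*` (continuous functional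
calculus for Hermitian matrices). -/
noncomputable def matrixLog {n : Type*} [Fintype n] [DecidableEq n]
    {M : Matrix n n ℂ} (hM : M.IsHermitian) : Matrix n n ℂ :=
  (hM.eigenvectorUnitary : Matrix n n ℂ) *
    Matrix.diagonal (fun i => (Real.log (hM.eigenvalues i) : ℂ)) *
    star (hM.eigenvectorUnitary : Matrix n n ℂ)

namespace Matrix.IsHermitian

variable {n 𝕜 : Type*} [RCLike 𝕜] [Fintype n] [DecidableEq n]

lemma trace_cfc {A : Matrix n n 𝕜} (hA : A.IsHermitian) (f : ℝ → ℝ) :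
    (cfc f A).trace = ∑ i, (f (hA.eigenvalues i) : 𝕜) := by
  rw [hA.cfc_eq, IsHermitian.cfc, Unitary.conjStarAlgAut_apply, trace_mul_cycle,
    Unitary.coe_star_mul_self, one_mul, trace_diagonal]
  rfl

lemma eigenvalues_fin_two_of_trace_det {A : Matrix (Fin 2) (Fin 2) 𝕜} (hA : A.IsHermitian)
    {a r : ℝ} (htr : A.trace = ((2 * a : ℝ) : 𝕜)) (hdet : A.det = ((a ^ 2 - r ^ 2 : ℝ) : 𝕜)) :
    (hA.eigenvalues 0 = a + r ∧ hA.eigenvalues 1 = a - r) ∨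
      (hA.eigenvalues 0 = a - r ∧ hA.eigenvalues 1 = a + r) := by
  have hsum : hA.eigenvalues 0 + hA.eigenvalues 1 = 2 * a := by
    have := hA.trace_eq_sum_eigenvalues
    rw [htr, Fin.sum_univ_two] at this
    exact_mod_cast this.symm
  have hprod : hA.eigenvalues 0 * hA.eigenvalues 1 = a ^ 2 - r ^ 2 := by
    have := hA.det_eq_prod_eigenvalues
    rw [hdet, Fin.prod_univ_two] at this
    exact_mod_cast this.symm
  have hquad : (hA.eigenvalues 0 - (a + r)) * (hA.eigenvalues 0 - (a - r)) = 0 := by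
    linear_combination hA.eigenvalues 0 * hsum - hprod
  rcases mul_eq_zero.mp hquad with h | h
  · exact .inl ⟨by linarith, by linarith⟩
  · exact .inr ⟨by linarith, by linarith⟩

end Matrix.IsHermitian

section matrixLog

variable {n : Type*} [Fintype n] [DecidableEq n] {M : Matrix n n ℂ}

lemma matrixLog_eq_cfc (hM : M.IsHermitian) : matrixLog hM = cfc Real.log M := by
  rw [hM.cfc_eq, IsHermitian.cfc, Unitary.conjStarAlgAut_apply]
  rfl

lemma trace_mul_matrixLog (hM : M.IsHermitian) :
    (M * matrixLog hM).trace =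
      ∑ i, ((hM.eigenvalues i * Real.log (hM.eigenvalues i) : ℝ) : ℂ) := by
  have hmul : M * cfc Real.log M = cfc (fun x => x * Real.log x) M := by
    rw [cfc_mul (fun x => x) Real.log M (hg := M.finite_real_spectrum.continuousOn _),
      cfc_id' ℝ M]
  rw [matrixLog_eq_cfc, hmul, hM.trace_cfc]
  push_cast
  rfl

end matrixLog

lemma pauli_combination_eq (w₀ w₁ w₂ w₃ : ℝ) :
    (w₀ : ℂ) • pauli 0 + (w₁ : ℂ) • pauli 1 + (w₂ : ℂ) • pauli 2 + (w₃ : ℂ) • pauli 3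
      = !![(w₀ + w₃ : ℂ), w₁ - w₂ * Complex.I; w₁ + w₂ * Complex.I, w₀ - w₃] := by
  ext i j
  fin_cases i <;> fin_cases j <;> simp [pauli] <;> ring

lemma trace_pauli_combination (w₀ w₁ w₂ w₃ : ℝ) :
    ((w₀ : ℂ) • pauli 0 + (w₁ : ℂ) • pauli 1 + (w₂ : ℂ) • pauli 2 + (w₃ : ℂ) • pauli 3).trace
      = ((2 * w₀ : ℝ) : ℂ) := by
  rw [pauli_combination_eq, trace_fin_two_of]
  push_cast
  ring

lemma det_pauli_combination (w₀ w₁ w₂ w₃ : ℝ) :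
    ((w₀ : ℂ) • pauli 0 + (w₁ : ℂ) • pauli 1 + (w₂ : ℂ) • pauli 2 + (w₃ : ℂ) • pauli 3).det
      = ((w₀ ^ 2 - (w₁ ^ 2 + w₂ ^ 2 + w₃ ^ 2) : ℝ) : ℂ) := by
  rw [pauli_combination_eq, det_fin_two_of]
  push_cast
  linear_combination (w₂ : ℂ) ^ 2 * Complex.I_sq

lemma add_mul_log_add_add_sub_mul_log_sub {w r : ℝ} (hw : w ≠ 0) (hp : w + r ≠ 0)
    (hm : w - r ≠ 0) :
    (w + r) * Real.log (w + r) + (w - r) * Real.log (w - r)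
      = 2 * w * (Real.log w + cFun (r / w)) := by
  have hsq : 1 - (r / w) ^ 2 = (w + r) * (w - r) / w ^ 2 := by field_simp; ring
  have hratio : (1 + r / w) / (1 - r / w) = (w + r) / (w - r) := by
    rw [one_add_div hw, one_sub_div hw, div_div_div_cancel_right₀ hw]
  rw [cFun, hsq, hratio, Real.log_div (mul_ne_zero hp hm) (pow_ne_zero 2 hw),
    Real.log_mul hp hm, Real.log_div hp hm, Real.log_pow]
  field_simp
  ring

/-- Let `w₀, w₁, w₂, w₃` be real with `√(w₁²+w₂²+w₃²) < w₀`, and let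
`M = w₀σ₀ + w₁σ₁ + w₂σ₂ + w₃σ₃` (a Hermitian matrix).  Then `M` is positive definite
and `tr(M·log M) = 2·w₀·(log(w₀) + c(|w⃗|/w₀))` with `|w⃗| = √(w₁²+w₂²+w₃²)`. -/
theorem trace_mul_log_pauli_combination (w₀ w₁ w₂ w₃ : ℝ)
    (h : Real.sqrt (w₁ ^ 2 + w₂ ^ 2 + w₃ ^ 2) < w₀)
    (M : Matrix (Fin 2) (Fin 2) ℂ)
    (hMdef : M = (w₀ : ℂ) • pauli 0 + (w₁ : ℂ) • pauli 1 + (w₂ : ℂ) • pauli 2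
        + (w₃ : ℂ) • pauli 3)
    (hM : M.IsHermitian) :
    M.PosDef ∧
    (M * matrixLog hM).trace =
      ((2 * w₀ * (Real.log w₀ + cFun (Real.sqrt (w₁ ^ 2 + w₂ ^ 2 + w₃ ^ 2) / w₀)) : ℝ) : ℂ) := by
  set r := Real.sqrt (w₁ ^ 2 + w₂ ^ 2 + w₃ ^ 2)
  have hr : 0 ≤ r := Real.sqrt_nonneg _
  have htr : M.trace = ((2 * w₀ : ℝ) : ℂ) := hMdef ▸ trace_pauli_combination w₀ w₁ w₂ w₃
  have hdet : M.det = ((w₀ ^ 2 - r ^ 2 : ℝ) : ℂ) := by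
    rw [hMdef, det_pauli_combination, Real.sq_sqrt (by positivity)]
  have hlog := add_mul_log_add_add_sub_mul_log_sub (w := w₀) (r := r)
    (by linarith) (by linarith) (by linarith)
  rw [hM.posDef_iff_eigenvalues_pos, Fin.forall_fin_two, trace_mul_matrixLog, Fin.sum_univ_two,
    ← Complex.ofReal_add, Complex.ofReal_inj, ← hlog]
  rcases hM.eigenvalues_fin_two_of_trace_det htr hdet with ⟨h0, h1⟩ | ⟨h0, h1⟩ <;>
    rw [h0, h1] <;> exact ⟨⟨by linarith, by linarith⟩, by ring⟩
end

section
/- Let q₀ ∈ ℝ and q⃗ = (q₁,q₂,q₃) ∈ ℝ³ with Q := √(q₁²+q₂²+q₃²) > 0. Define w₀ := cosh(Q)·e^{−q₀} and w_s := −q_s·(sinh(Q)/Q)·e^{−q₀} for s = 1,2,3, and set |w⃗| := √(w₁²+w₂²+w₃²). Then 0 < |w⃗| < w₀, and with λ := |w⃗|/w₀ the following Lagrange-multiplier equations hold: (i) log(w₀) + c(λ) − λ·c′(λ) + q₀ = 0; (ii) (w_s/|w⃗|)·c′(λ) + q_s = 0 for s = 1,2,3. Moreover, (w₀, w₁, w₂,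 w₃) is the unique quadruple of real numbers with w₀ > 0 and 0 < √(w₁²+w₂²+w₃²) < w₀ satisfying (i) and (ii). -/
/-- The derivative `c′(λ) = (1/2)·log((1+λ)/(1−λ)) = artanh λ` of `cFun`. -/
noncomputable def cDer (l : ℝ) : ℝ := (1 / 2) * Real.log ((1 + l) / (1 - l))

/-!
Since `c′ = artanh` and `c(λ) − λ c′(λ) = −log cosh (artanh λ)`, equation (ii) says that `w⃗` is
a negative multiple of `q⃗` with `c′(λ) = |q⃗| = Q`, i.e. `λ = tanh Q`, and then (i) reads
`log w₀ = log cosh Q − q₀`. These determine `w₀`, then `|w⃗| = λ w₀`, and hence `w⃗`.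
-/

open Real Set

lemma cDer_eq_artanh {l : ℝ} (hl : l ∈ Icc (-1) 1) : cDer l = artanh l :=
  (artanh_eq_half_log hl).symm

lemma cFun_sub_mul_cDer {l : ℝ} (hl : l ∈ Ioo (-1) 1) :
    cFun l - l * cDer l = -log (cosh (artanh l)) := by
  have h : 0 ≤ 1 - l ^ 2 := by nlinarith [hl.1, hl.2]
  rw [cosh_artanh hl, one_div, log_inv, log_sqrt h]
  unfold cFun cDer
  ring

lemma sqrt_sum_mul_sq {ι : Type*} [Fintype ι] (c : ℝ) (v : ι → ℝ) :
    √(∑ s, (c * v s) ^ 2) = |c| * √(∑ s, v s ^ 2) := by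
  simp only [mul_pow, ← Finset.mul_sum]
  rw [sqrt_mul (sq_nonneg c), sqrt_sq_eq_abs]

section

variable {ι : Type*} [Fintype ι] {q₀ Q : ℝ} {q : ι → ℝ}

theorem lagrange_equations_of_eq (hQ : Q = √(∑ s, q s ^ 2)) (hQpos : 0 < Q)
    {w₀ : ℝ} (hw₀ : w₀ = cosh Q * exp (-q₀))
    {w : ι → ℝ} (hw : ∀ s, w s = -(q s) * (sinh Q / Q) * exp (-q₀)) :
    0 < √(∑ s, w s ^ 2) ∧ √(∑ s, w s ^ 2) < w₀ ∧
    (log w₀ + cFun (√(∑ s, w s ^ 2) / w₀)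
      - (√(∑ s, w s ^ 2) / w₀) * cDer (√(∑ s, w s ^ 2) / w₀) + q₀ = 0) ∧
    (∀ s, (w s / √(∑ s, w s ^ 2)) * cDer (√(∑ s, w s ^ 2) / w₀) + q s = 0) := by
  have hsinh : 0 < sinh Q := sinh_pos_iff.2 hQpos
  have hwn : √(∑ s, w s ^ 2) = sinh Q * exp (-q₀) := by
    have hw' : w = fun s => -(sinh Q / Q * exp (-q₀)) * q s := funext fun s => by rw [hw]; ring
    rw [hw', sqrt_sum_mul_sq, ← hQ, abs_neg, abs_of_pos (by positivity)]
    field_simp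
  have htanh : tanh Q ∈ Ioo (-1) 1 := ⟨neg_one_lt_tanh Q, tanh_lt_one Q⟩
  have hl : √(∑ s, w s ^ 2) / w₀ = tanh Q := by
    rw [hwn, hw₀, tanh_eq_sinh_div_cosh]
    field_simp
  have hc : cDer (tanh Q) = Q := by rw [cDer_eq_artanh (Ioo_subset_Icc_self htanh), artanh_tanh]
  refine ⟨?_, ?_, ?_, fun s => ?_⟩
  · rw [hwn]; positivity
  · rw [hwn, hw₀]; gcongr; exact sinh_lt_cosh Q
  · rw [hl, add_sub_assoc, cFun_sub_mul_cDer htanh, artanh_tanh, hw₀,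
      log_mul (cosh_pos Q).ne' (exp_pos _).ne', log_exp]
    ring
  · rw [hl, hc, hw s, hwn]
    field_simp
    ring

theorem eq_of_lagrange_equations (hQ : Q = √(∑ s, q s ^ 2))
    {v₀ : ℝ} {v : ι → ℝ} (hv₀ : 0 < v₀)
    (hL : 0 < √(∑ s, v s ^ 2)) (hLv : √(∑ s, v s ^ 2) < v₀)
    (hi : log v₀ + cFun (√(∑ s, v s ^ 2) / v₀)
      - (√(∑ s, v s ^ 2) / v₀) * cDer (√(∑ s, v s ^ 2) / v₀) + q₀ = 0)
    (hii : ∀ s, (v s / √(∑ s, v s ^ 2)) * cDer (√(∑ s, v s ^ 2) / v₀) + q s = 0) :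
    v₀ = cosh Q * exp (-q₀) ∧ ∀ s, v s = -(q s) * (sinh Q / Q) * exp (-q₀) := by
  generalize hLdef : √(∑ s, v s ^ 2) = L at hL hLv hi hii
  have hl : L / v₀ ∈ Ioo (-1) 1 := ⟨by linarith [div_pos hL hv₀], (div_lt_one hv₀).2 hLv⟩
  have hartanh : cDer (L / v₀) = artanh (L / v₀) := cDer_eq_artanh (Ioo_subset_Icc_self hl)
  have hμ : 0 < cDer (L / v₀) := hartanh ▸ artanh_pos ⟨div_pos hL hv₀, hl.2⟩
  have hv : v = fun s => -(L / cDer (L / v₀)) * q s := funext fun s => by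
    have := hii s
    field_simp at this ⊢
    linarith
  have hμQ : cDer (L / v₀) = Q := by
    rw [hv, sqrt_sum_mul_sq, ← hQ, abs_neg, abs_of_pos (div_pos hL hμ)] at hLdef
    field_simp at hLdef
    linarith
  have hlQ : L / v₀ = tanh Q := by rw [← hμQ, hartanh, tanh_artanh hl]
  have hv₀' : v₀ = cosh Q * exp (-q₀) := by
    rw [add_sub_assoc, cFun_sub_mul_cDer hl, ← hartanh, hμQ] at hi
    rw [← exp_log hv₀, show log v₀ = log (cosh Q) + -q₀ by linarith, exp_add, exp_log (cosh_pos Q)]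
  have hL' : L = sinh Q * exp (-q₀) := by
    rw [← div_mul_cancel₀ L hv₀.ne', hlQ, hv₀', tanh_eq_sinh_div_cosh]
    field_simp
  exact ⟨hv₀', fun s => by rw [hv, hμQ, hL']; ring⟩

end

/-- Let `q₀ ∈ ℝ`, `q⃗ ∈ ℝ³` with `Q = √(q₁²+q₂²+q₃²) > 0`, and set
`w₀ = cosh(Q)e^{−q₀}`, `w_s = −q_s·(sinh(Q)/Q)·e^{−q₀}`, `|w⃗| = √(w₁²+w₂²+w₃²)`.
Then `0 < |w⃗| < w₀` and, with `λ = |w⃗|/w₀`, the Lagrange-multiplier equations hold: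
(i) `log(w₀) + c(λ) − λ·c′(λ) + q₀ = 0`;
(ii) `(w_s/|w⃗|)·c′(λ) + q_s = 0` for `s = 1,2,3`;
moreover `(w₀, w⃗)` is the unique such quadruple with `w₀ > 0` and
`0 < √(w₁²+w₂²+w₃²) < w₀` satisfying (i) and (ii). -/
theorem lagrange_multiplier_equations (q₀ : ℝ) (q : Fin 3 → ℝ)
    (Q : ℝ) (hQdef : Q = Real.sqrt (∑ s, q s ^ 2)) (hQpos : 0 < Q)
    (w₀ : ℝ) (hw₀ : w₀ = Real.cosh Q * Real.exp (-q₀))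
    (w : Fin 3 → ℝ) (hw : ∀ s, w s = -(q s) * (Real.sinh Q / Q) * Real.exp (-q₀))
    (wn : ℝ) (hwn : wn = Real.sqrt (∑ s, w s ^ 2)) :
    0 < wn ∧ wn < w₀ ∧
    (Real.log w₀ + cFun (wn / w₀) - (wn / w₀) * cDer (wn / w₀) + q₀ = 0) ∧
    (∀ s : Fin 3, (w s / wn) * cDer (wn / w₀) + q s = 0) ∧
    (∀ (v₀ : ℝ) (v : Fin 3 → ℝ), 0 < v₀ →
      0 < Real.sqrt (∑ s, v s ^ 2) → Real.sqrt (∑ s, v s ^ 2) < v₀ →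
      (Real.log v₀ + cFun (Real.sqrt (∑ s, v s ^ 2) / v₀)
        - (Real.sqrt (∑ s, v s ^ 2) / v₀) * cDer (Real.sqrt (∑ s, v s ^ 2) / v₀) + q₀ = 0) →
      (∀ s : Fin 3, (v s / Real.sqrt (∑ s, v s ^ 2))
        * cDer (Real.sqrt (∑ s, v s ^ 2) / v₀) + q s = 0) →
      v₀ = w₀ ∧ v = w) := by
  subst hwn
  obtain ⟨hpos, hlt, hi, hii⟩ := lagrange_equations_of_eq hQdef hQpos hw₀ hw
  refine ⟨hpos, hlt, hi, hii, fun v₀ v hv₀ hL hLv hvi hvii => ?_⟩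
  obtain ⟨hv₀w, hvw⟩ := eq_of_lagrange_equations hQdef hv₀ hL hLv hvi hvii
  exact ⟨hv₀w.trans hw₀.symm, funext fun s => (hvw s).trans (hw s).symm⟩
end

section
/- Let m > 0, θ > 0 be real constants, let n₀ ≠ 0 and n_s ∈ ℝ (s = 0,1,2,3), let u₀, u_s ∈ ℝ², and set J_s := n_s·u_s ∈ ℝ². Define w_s^{eq}(p) = (n_s/(2πmθ))·[1 + (u_s − u₀)·(p − u₀)/(mθ)]·exp(−|p − u₀|²/(2mθ)). Then for every s = 0,1,2,3 and every i,k ∈ {1,2}: ∫_{ℝ²} p^i p^k w_s^{eq}(p) dp = n_s·( mθ·δ_{ik} − J₀^i J₀^k / n₀² ) + ( J₀^i J_s^k + J_s^i J₀^k ) / n₀, where δ_{ik} is the Kronecker delta and superscripts denote vector components. -/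
/-! After the shift `p = u₀ + x`, the moment becomes the integral of a cubic polynomial in `x`
against the centred Gaussian `G x = exp (-‖x‖² / (2mθ))`. Averaging the integrand with its
reflection `x ↦ -x` kills the odd terms, the mass of `G` is `2πmθ`, and its second moments
`∫ ⟪a, x⟫ ⟪c, x⟫ G = mθ ⟪a, c⟫ ∫ G` follow from a single integration by parts along `c`,
since `∂_c G = -⟪c, x⟫ G / (mθ)`. -/

open MeasureTheory Real RealInnerProductSpace

theorem integral_eq_integral_add_comp_neg_div_two {G : Type*} [MeasurableSpace G] [AddGroup G]
    [MeasurableNeg G] {μ : Measure G} [μ.IsNegInvariant] {f : G → ℝ} (hf : Integrable f μ) :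
    ∫ x, f x ∂μ = ∫ x, (f x + f (-x)) / 2 ∂μ := by
  rw [integral_div, integral_add hf hf.comp_neg, integral_neg_eq_self f μ]
  ring

section Gaussian

variable {E : Type*} [NormedAddCommGroup E] [InnerProductSpace ℝ E] {b : ℝ}

theorem abs_inner_add_le (a x : E) (α : ℝ) : |⟪a, x⟫ + α| ≤ (‖a‖ + |α|) * (1 + ‖x‖) := by
  have := abs_real_inner_le_norm a x
  calc |⟪a, x⟫ + α| ≤ |⟪a, x⟫| + |α| := abs_add_le _ _
    _ ≤ _ := by nlinarith [norm_nonneg a, norm_nonneg x, abs_nonneg α]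

theorem hasLineDerivAt_exp_neg_mul_sq_norm (x v : E) :
    HasLineDerivAt ℝ (fun x : E ↦ exp (-b * ‖x‖ ^ 2))
      (-2 * b * ⟪x, v⟫ * exp (-b * ‖x‖ ^ 2)) x v := by
  convert (((hasStrictFDerivAt_norm_sq x).hasFDerivAt.const_mul (-b)).exp).hasLineDerivAt v
    using 1
  simp only [neg_smul, smul_neg, neg_apply, smul_apply,
    innerSL_apply_apply, smul_eq_mul, nsmul_eq_mul, Nat.cast_ofNat]
  ring

/-- First-order expansion in `w` of the Maxwellian `exp (-‖p - (u + w)‖² / (2T))`. -/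
noncomputable def perturbedMaxwellian (T : ℝ) (u w p : E) : ℝ :=
  (1 + ⟪w, p - u⟫ / T) * exp (-‖p - u‖ ^ 2 / (2 * T))

theorem perturbedMaxwellian_zero_apply (T : ℝ) (w x : E) :
    perturbedMaxwellian T 0 w x = (⟪T⁻¹ • w, x⟫ + 1) * exp (-(2 * T)⁻¹ * ‖x‖ ^ 2) := by
  simp only [perturbedMaxwellian, sub_zero, real_inner_smul_left, div_eq_inv_mul, mul_neg, neg_mul]
  ring

variable [FiniteDimensional ℝ E] [MeasurableSpace E] [BorelSpace E]
  {μ : Measure E} [μ.IsAddHaarMeasure] {T : ℝ}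

theorem integrable_norm_pow_mul_exp_neg_mul_sq_norm (hb : 0 < b) (k : ℕ) :
    Integrable (fun x : E ↦ ‖x‖ ^ k * exp (-b * ‖x‖ ^ 2)) μ := by
  rcases subsingleton_or_nontrivial E with hE | hE
  · exact .of_finite
  refine (integrable_fun_norm_addHaar μ (f := fun y ↦ y ^ k * exp (-b * y ^ 2))).2 ?_
  have hs : (-1 : ℝ) < (Module.finrank ℝ E - 1 + k : ℕ) :=
    neg_one_lt_zero.trans_le (Nat.cast_nonneg _)
  refine (integrableOn_rpow_mul_exp_neg_mul_sq hb hs).congr_fun (fun y _ ↦ ?_) measurableSet_Ioi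
  simp only [rpow_natCast, pow_add, smul_eq_mul, mul_assoc]

theorem integrable_exp_neg_mul_sq_norm (hb : 0 < b) :
    Integrable (fun x : E ↦ exp (-b * ‖x‖ ^ 2)) μ := by
  simpa using integrable_norm_pow_mul_exp_neg_mul_sq_norm (μ := μ) hb 0

theorem integrable_mul_exp_neg_mul_sq_norm_of_abs_le (hb : 0 < b) {f : E → ℝ}
    (hf : AEStronglyMeasurable f μ) {C : ℝ} {k : ℕ} (hfC : ∀ x, |f x| ≤ C * (1 + ‖x‖) ^ k) :
    Integrable (fun x ↦ f x * exp (-b * ‖x‖ ^ 2)) μ := by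
  have hC : 0 ≤ C := by simpa using (abs_nonneg _).trans (hfC 0)
  refine (((integrable_exp_neg_mul_sq_norm hb).add
    (integrable_norm_pow_mul_exp_neg_mul_sq_norm hb k)).const_mul (C * 2 ^ (k - 1))).mono'
    (hf.mul (by fun_prop)) (ae_of_all _ fun x ↦ ?_)
  rw [norm_mul, Real.norm_eq_abs, Real.norm_of_nonneg (exp_pos _).le]
  calc |f x| * exp (-b * ‖x‖ ^ 2) ≤ C * (1 + ‖x‖) ^ k * exp (-b * ‖x‖ ^ 2) := by
        gcongr; exact hfC x
    _ ≤ C * (2 ^ (k - 1) * (1 ^ k + ‖x‖ ^ k)) * exp (-b * ‖x‖ ^ 2) := by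
        gcongr; exact add_pow_le zero_le_one (norm_nonneg x) k
    _ = _ := by simp only [Pi.add_apply, one_pow]; ring

theorem integrable_inner_mul_inner_mul_exp_neg_mul_sq_norm (hb : 0 < b) (a c : E) :
    Integrable (fun x ↦ ⟪a, x⟫ * ⟪c, x⟫ * exp (-b * ‖x‖ ^ 2)) μ := by
  refine integrable_mul_exp_neg_mul_sq_norm_of_abs_le hb (by fun_prop) (C := ‖a‖ * ‖c‖) (k := 2)
    fun x ↦ ?_
  calc |⟪a, x⟫ * ⟪c, x⟫| = |⟪a, x⟫ + 0| * |⟪c, x⟫ + 0| := by simp [abs_mul]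
    _ ≤ (‖a‖ + |0|) * (1 + ‖x‖) * ((‖c‖ + |0|) * (1 + ‖x‖)) :=
      mul_le_mul (abs_inner_add_le a x 0) (abs_inner_add_le c x 0) (abs_nonneg _) (by positivity)
    _ = ‖a‖ * ‖c‖ * (1 + ‖x‖) ^ 2 := by simp only [abs_zero, add_zero]; ring

theorem integral_inner_mul_inner_mul_exp_neg_mul_sq_norm (hb : 0 < b) (a c : E) :
    ∫ x, ⟪a, x⟫ * ⟪c, x⟫ * exp (-b * ‖x‖ ^ 2) ∂μ
      = ⟪a, c⟫ / (2 * b) * ∫ x, exp (-b * ‖x‖ ^ 2) ∂μ := by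
  have ibp := integral_bilinear_hasLineDerivAt_right_eq_neg_left_of_integrable (μ := μ)
    (B := ContinuousLinearMap.mul ℝ ℝ) (f := fun x ↦ ⟪a, x⟫) (f' := fun _ ↦ ⟪a, c⟫)
    (g := fun x ↦ exp (-b * ‖x‖ ^ 2)) (g' := fun x ↦ -2 * b * ⟪c, x⟫ * exp (-b * ‖x‖ ^ 2))
    ((integrable_exp_neg_mul_sq_norm hb).const_mul _) ?_ ?_
    (fun x _ ↦ (innerSL ℝ a).hasFDerivAt.hasLineDerivAt c)
    (fun x _ ↦ real_inner_comm x c ▸ hasLineDerivAt_exp_neg_mul_sq_norm x c)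
  · simp only [ContinuousLinearMap.mul_apply', integral_const_mul] at ibp
    have hb' : -2 * b ≠ 0 := by linarith
    calc ∫ x, ⟪a, x⟫ * ⟪c, x⟫ * exp (-b * ‖x‖ ^ 2) ∂μ
        = (-2 * b)⁻¹ * ∫ x, ⟪a, x⟫ * (-2 * b * ⟪c, x⟫ * exp (-b * ‖x‖ ^ 2)) ∂μ := by
          rw [← integral_const_mul]; congr 1 with x; field_simp
      _ = ⟪a, c⟫ / (2 * b) * ∫ x, exp (-b * ‖x‖ ^ 2) ∂μ := by rw [ibp]; field_simp
  · simpa only [ContinuousLinearMap.mul_apply', mul_left_comm, mul_assoc] using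
      (integrable_inner_mul_inner_mul_exp_neg_mul_sq_norm (μ := μ) hb a c).const_mul (-2 * b)
  · refine integrable_mul_exp_neg_mul_sq_norm_of_abs_le hb (by fun_prop) (C := ‖a‖) (k := 1)
      fun x ↦ ?_
    simpa using abs_inner_add_le a x 0

theorem integrable_inner_add_mul_inner_add_mul_perturbedMaxwellian_zero (hT : 0 < T)
    (a c w : E) (α γ : ℝ) :
    Integrable (fun x ↦ (⟪a, x⟫ + α) * (⟪c, x⟫ + γ) * perturbedMaxwellian T 0 w x) μ := by
  simp only [perturbedMaxwellian_zero_apply, ← mul_assoc]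
  refine integrable_mul_exp_neg_mul_sq_norm_of_abs_le (by positivity) (by fun_prop)
    (C := (‖a‖ + |α|) * (‖c‖ + |γ|) * (‖T⁻¹ • w‖ + |1|)) (k := 3) fun x ↦ ?_
  rw [abs_mul, abs_mul, pow_succ, pow_two, mul_mul_mul_comm, mul_mul_mul_comm _ _ (1 + ‖x‖)]
  have h := abs_inner_add_le (T⁻¹ • w) x 1
  gcongr
  · exact abs_inner_add_le a x α
  · exact abs_inner_add_le c x γ

theorem integral_inner_add_mul_inner_add_mul_perturbedMaxwellian_zero (hT : 0 < T)
    (a c w : E) (α γ : ℝ) :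
    ∫ x, (⟪a, x⟫ + α) * (⟪c, x⟫ + γ) * perturbedMaxwellian T 0 w x ∂μ
      = (T * ⟪a, c⟫ + α * γ + α * ⟪c, w⟫ + γ * ⟪a, w⟫)
        * ∫ x, exp (-(2 * T)⁻¹ * ‖x‖ ^ 2) ∂μ := by
  have hb : 0 < (2 * T)⁻¹ := by positivity
  have hQ := integrable_inner_mul_inner_mul_exp_neg_mul_sq_norm (μ := μ) hb
  have hG := integrable_exp_neg_mul_sq_norm (μ := μ) hb
  have heven : ∀ x, ((⟪a, x⟫ + α) * (⟪c, x⟫ + γ) * perturbedMaxwellian T 0 w x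
      + (⟪a, -x⟫ + α) * (⟪c, -x⟫ + γ) * perturbedMaxwellian T 0 w (-x)) / 2
      = ⟪a, x⟫ * ⟪c, x⟫ * exp (-(2 * T)⁻¹ * ‖x‖ ^ 2)
        + α / T * (⟪c, x⟫ * ⟪w, x⟫ * exp (-(2 * T)⁻¹ * ‖x‖ ^ 2))
        + γ / T * (⟪a, x⟫ * ⟪w, x⟫ * exp (-(2 * T)⁻¹ * ‖x‖ ^ 2))
        + α * γ * exp (-(2 * T)⁻¹ * ‖x‖ ^ 2) := fun x ↦ by
    simp only [perturbedMaxwellian_zero_apply, inner_neg_right, norm_neg, real_inner_smul_left]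
    ring
  rw [integral_eq_integral_add_comp_neg_div_two
    (integrable_inner_add_mul_inner_add_mul_perturbedMaxwellian_zero hT a c w α γ)]
  simp_rw [heven]
  rw [integral_add (by fun_prop) (by fun_prop), integral_add (by fun_prop) (by fun_prop),
    integral_add (by fun_prop) (by fun_prop)]
  simp only [integral_const_mul, integral_inner_mul_inner_mul_exp_neg_mul_sq_norm hb]
  field_simp
  ring

theorem integral_inner_mul_inner_mul_perturbedMaxwellian (hT : 0 < T) (u w a c : E) :
    ∫ p, ⟪a, p⟫ * ⟪c, p⟫ * perturbedMaxwellian T u w p ∂μ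
      = (T * ⟪a, c⟫ + ⟪a, u⟫ * ⟪c, u⟫ + ⟪a, u⟫ * ⟪c, w⟫ + ⟪c, u⟫ * ⟪a, w⟫)
        * ∫ x, exp (-(2 * T)⁻¹ * ‖x‖ ^ 2) ∂μ := by
  have hshift x : perturbedMaxwellian T u w (x + u) = perturbedMaxwellian T 0 w x := by
    simp only [perturbedMaxwellian, add_sub_cancel_right, sub_zero]
  rw [← integral_add_right_eq_self _ u]
  simp only [inner_add_right, hshift]
  exact integral_inner_add_mul_inner_add_mul_perturbedMaxwellian_zero hT a c w _ _

end Gaussian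

theorem integral_exp_neg_mul_sq_norm_euclideanSpace_fin_two {b : ℝ} (hb : 0 < b) :
    ∫ p : EuclideanSpace ℝ (Fin 2), exp (-b * ‖p‖ ^ 2) = π / b := by
  rw [GaussianFourier.integral_rexp_neg_mul_sq_norm hb, finrank_euclideanSpace_fin,
    Nat.cast_ofNat, div_self two_ne_zero, rpow_one]

/-- Let `m, θ > 0`, `n₀ ≠ 0`, `u_s ∈ ℝ²`, `J_s = n_s·u_s`, and
`w_s^{eq}(p) = (n_s/(2πmθ))·[1 + (u_s − u₀)·(p − u₀)/(mθ)]·exp(−|p − u₀|²/(2mθ))`.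
Then for all `s = 0,1,2,3` and `i,k ∈ {1,2}`:
`∫ p^i p^k w_s^{eq}(p) dp = n_s·(mθ·δ_{ik} − J₀^i J₀^k/n₀²) + (J₀^i J_s^k + J_s^i J₀^k)/n₀`. -/
theorem equilibrium_wigner_second_moments (m θ : ℝ) (hm : 0 < m) (hθ : 0 < θ)
    (n : Fin 4 → ℝ) (hn₀ : n 0 ≠ 0) (u : Fin 4 → EuclideanSpace ℝ (Fin 2))
    (J : Fin 4 → EuclideanSpace ℝ (Fin 2)) (hJ : ∀ s, J s = n s • u s)
    (weq : Fin 4 → EuclideanSpace ℝ (Fin 2) → ℝ)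
    (hweq : ∀ s p, weq s p = (n s / (2 * Real.pi * m * θ)) *
        (1 + ⟪u s - u 0, p - u 0⟫ / (m * θ)) *
        Real.exp (-‖p - u 0‖ ^ 2 / (2 * m * θ))) :
    ∀ (s : Fin 4) (i k : Fin 2),
      (∫ p : EuclideanSpace ℝ (Fin 2), p i * p k * weq s p)
        = n s * (m * θ * (if i = k then (1 : ℝ) else 0) - J 0 i * J 0 k / n 0 ^ 2)
          + (J 0 i * J s k + J s i * J 0 k) / n 0 := by
  intro s i k
  have hT : 0 < m * θ := mul_pos hm hθ
  have key := integral_inner_mul_inner_mul_perturbedMaxwellian (μ := volume) hT (u 0) (u s - u 0)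
    (EuclideanSpace.single i 1) (EuclideanSpace.single k 1)
  simp only [EuclideanSpace.inner_single_left, map_one, one_mul, PiLp.single_apply] at key
  calc ∫ p, p i * p k * weq s p
      = n s / (2 * π * m * θ) * ∫ p, p i * p k * perturbedMaxwellian (m * θ) (u 0) (u s - u 0) p := by
        rw [← integral_const_mul]
        congr 1 with p
        simp only [hweq, perturbedMaxwellian, mul_assoc]
        ring
    _ = _ := by
        rw [key, integral_exp_neg_mul_sq_norm_euclideanSpace_fin_two (by positivity)]
        simp only [hJ, PiLp.sub_apply, PiLp.smul_apply, smul_eq_mul]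
        field_simp
        ring
end
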